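/- arXiv:1405.4443 — 2 statements merged into one kernel-verified Lean document; each statement's English description precedes it below -/
import Mathlib

section
/- The flat order on indexed operator families is a complete partial order: it has a least element (the family of all-zero operators), and every chain has a least upper bound. Explicitly, for a chain {A_i}, setting Δ_i = {n̄ : A_i(n̄) ≠ 0} and Δ_i↓ its below-closure, the family A defined by A(n̄) = A_i(n̄) if n̄ ∈ Δ_i↓ for some i, and A(n̄) = 0 otherwise, is well-defined and is the supremum of {A_i}. -/
/-- A subset `Ω ⊆ ω^C` is below-closed if `n̄ ∈ Ω` and `m̄ ≤ n̄` imply `m̄ ∈ Ω`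
(componentwise order on `C → ℕ`). -/
def BelowClosed {C : Type*} (Ω : Set (C → ℕ)) : Prop :=
  ∀ n ∈ Ω, ∀ m : C → ℕ, m ≤ n → m ∈ Ω

/-- The flat order on `ω^C`-indexed families of operators: `A ⊑ B` iff there is a
below-closed `Ω ⊆ ω^C` with `A n̄ = B n̄` for `n̄ ∈ Ω` and `A n̄ = 0` for `n̄ ∉ Ω`. -/
def FlatLE {C : Type*} {V : (C → ℕ) → Type*} [∀ n, Zero (V n)]
    (A B : ∀ n, V n) : Prop :=
  ∃ Ω : Set (C → ℕ), BelowClosed Ω ∧ (∀ n ∈ Ω, A n = B n) ∧ ∀ n ∉ Ω, A n = 0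

theorem flat_eq_of_below {C : Type*} {V : (C → ℕ) → Type*} [∀ n, Zero (V n)]
    {A B : ∀ n, V n} (h : FlatLE A B) {n : C → ℕ}
    (hn : ∃ m, n ≤ m ∧ A m ≠ 0) : A n = B n := by
  obtain ⟨Ω, hbc, heq, hz⟩ := h
  obtain ⟨m, hle, hne⟩ := hn
  have hmΩ : m ∈ Ω := by
    by_contra hm
    exact hne (hz m hm)
  exact heq n (hbc m hmΩ n hle)

/-- **The flat order is a complete partial order.**  The all-zero family is the least
element; and for every chain `{A_i}`, with `Δ_i = {n̄ : A_i n̄ ≠ 0}` and `Δ_i↓` its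
below-closure `{n̄ : ∃ m̄ ≥ n̄, A_i m̄ ≠ 0}`, the family `S` defined by `S n̄ = A_i n̄`
whenever `n̄ ∈ Δ_i↓` for some `i`, and `S n̄ = 0` if `n̄ ∉ ⋃_i Δ_i↓`, is well defined
(the choice of `i` does not matter) and is the least upper bound of `{A_i}`. -/
theorem flat_order_is_cpo {C : Type*} [Fintype C]
    {V : (C → ℕ) → Type*} [∀ n, Zero (V n)]
    {ι : Type*} [Nonempty ι] (A : ι → ∀ n, V n)
    (hchain : ∀ i j, FlatLE (A i) (A j) ∨ FlatLE (A j) (A i)) :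
    (∀ B : ∀ n, V n, FlatLE (fun _ => 0) B) ∧
      (∀ (n : C → ℕ) (i j : ι),
        (∃ m, n ≤ m ∧ A i m ≠ 0) → (∃ m, n ≤ m ∧ A j m ≠ 0) → A i n = A j n) ∧
      ∀ S : ∀ n, V n,
        (∀ (i : ι) (n : C → ℕ), (∃ m, n ≤ m ∧ A i m ≠ 0) → S n = A i n) →
        (∀ n : C → ℕ, (∀ i : ι, ¬ ∃ m, n ≤ m ∧ A i m ≠ 0) → S n = 0) →
        (∀ i, FlatLE (A i) S) ∧ ∀ B : ∀ n, V n, (∀ i, FlatLE (A i) B) → FlatLE S B := by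
  refine ⟨fun B => ⟨∅, fun n h => absurd h (Set.notMem_empty n), fun n h => absurd h (Set.notMem_empty n), fun n _ => rfl⟩, ?_, ?_⟩
  · intro n i j hi hj
    rcases hchain i j with h | h
    · exact flat_eq_of_below h hi
    · exact (flat_eq_of_below h hj).symm
  · intro S hS h0
    constructor
    · intro i
      refine ⟨{n | ∃ m, n ≤ m ∧ A i m ≠ 0}, ?_, ?_, ?_⟩
      · rintro n ⟨m, hle, hne⟩ k hk
        exact ⟨m, le_trans hk hle, hne⟩
      · intro n hn
        exact (hS i n hn).symm
      · intro n hn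
        by_contra hne
        exact hn ⟨n, le_refl n, hne⟩
    · intro B hB
      refine ⟨{n | ∃ i, ∃ m, n ≤ m ∧ A i m ≠ 0}, ?_, ?_, ?_⟩
      · rintro n ⟨i, m, hle, hne⟩ k hk
        exact ⟨i, m, le_trans hk hle, hne⟩
      · rintro n ⟨i, hi⟩
        rw [hS i n hi]
        exact flat_eq_of_below (hB i) hi
      · intro n hn
        exact h0 n (fun i hi => hn ⟨i, hi⟩)
end

section
/- The semantics of the unidirectionally recursive Hadamard walk syntactic approximations: for every n ≥ 1, the operator ⟦X^{(n)}⟧ = Σ_{i=0}^{n−1} [ (⊗_{j=0}^{i−1} |R⟩_{d_j}⟨R| ⊗ |L⟩_{d_i}⟨L|) H^{⊗(i+1)} ⊗ T_L T_R^i ] satisfies the recurrence ⟦X^{(n+1)}⟧ = (|L⟩⟨L| ⊗ T_L + |R⟩⟨R| ⊗ (T_R · shifted ⟦X^{(n)}⟧))(H ⊗ I), where the shifted term tensors an extra coin factor in front. -/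
open Classical

noncomputable section

/-- Basis index of the space `⊕_{i≥0} H_d^{⊗(i+1)} ⊗ H_p` in which the syntactic
approximations of the unidirectionally recursive Hadamard walk live: a grade `i`, a string
of `i+1` coin states (`false = L`, `true = R`, for coins `d_0,…,d_i`) and a position in
`ℤ`. -/
abbrev WalkIdx : Type := (Σ i : ℕ, (Fin (i + 1) → Bool)) × ℤ

/-- the ambient space `⊕_{i≥0} H_d^{⊗(i+1)} ⊗ H_p` (algebraically). -/
abbrev WalkSp : Type := WalkIdx →₀ ℂ

/-- basis vector. -/
def bas (a : WalkIdx) : WalkSp := Finsupp.single a 1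

/-- the linear operator determined by its values on basis vectors. -/
def oper (g : WalkIdx → WalkSp) : WalkSp →ₗ[ℂ] WalkSp :=
  Finsupp.lsum ℂ fun a => LinearMap.toSpanSingleton ℂ WalkSp (g a)

/-- translation of the position by `z`; `T_L = shiftPos (-1)`, `T_R = shiftPos 1`, and
`T_L T_R^i = shiftPos (i - 1)`. -/
def shiftPos (z : ℤ) : WalkSp →ₗ[ℂ] WalkSp :=
  Finsupp.lmapDomain ℂ ℂ fun a => (a.1, a.2 + z)

/-- Hadamard matrix entry `⟨a|H|b⟩`. -/
def had (a b : Bool) : ℂ := (Real.sqrt 2 : ℂ)⁻¹ * (if a && b then -1 else 1)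

/-- `H^{⊗(i+1)} ⊗ I`: the Hadamard transform applied to every coin of each grade. -/
def hadAll : WalkSp →ₗ[ℂ] WalkSp :=
  oper fun a => ∑ t : Fin (a.1.1 + 1) → Bool,
    (∏ k, had (t k) (a.1.2 k)) • bas (⟨⟨a.1.1, t⟩, a.2⟩)

/-- `H ⊗ I`: the Hadamard transform applied to the first coin `d_0` only. -/
def hadFirst : WalkSp →ₗ[ℂ] WalkSp :=
  oper fun a => ∑ b : Bool,
    had b (a.1.2 0) • bas (⟨⟨a.1.1, Function.update a.1.2 0 b⟩, a.2⟩)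

/-- the projection `⊗_{j=0}^{i-1} |R⟩_{d_j}⟨R| ⊗ |L⟩_{d_i}⟨L|` onto grade `i` with coin
string `R…RL`. -/
def projQ (i : ℕ) : WalkSp →ₗ[ℂ] WalkSp :=
  oper fun a =>
    if a.1.1 = i ∧ ∀ k : Fin (a.1.1 + 1), a.1.2 k = decide ((k : ℕ) < a.1.1) then bas a
    else 0

/-- the projection `|R⟩_{d_0}⟨R|` on the first coin (tensor identity elsewhere). -/
def projR : WalkSp →ₗ[ℂ] WalkSp :=
  oper fun a => if a.1.2 0 = true then bas a else 0

/-- tensoring a fresh front coin in state `b`: `e_{(i,t,m)} ↦ e_{(i+1, b::t, m)}`. -/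
def attach (b : Bool) : WalkSp →ₗ[ℂ] WalkSp :=
  Finsupp.lmapDomain ℂ ℂ fun a => (⟨a.1.1 + 1, Fin.cons b a.1.2⟩, a.2)

/-- the shift of an operator `X` by one coin: `(I_{d_0} ⊗ X)`, acting as `X` on the coins
`d_1, d_2, …` and on the position, and as the identity on the new front coin `d_0`;
this realises the renaming of coins in the substitution defining the syntactic
approximations. -/
def Kop (X : WalkSp →ₗ[ℂ] WalkSp) : WalkSp →ₗ[ℂ] WalkSp :=
  oper fun a =>
    match a with
    | (⟨0, _⟩, _) => 0
    | (⟨i + 1, s⟩, z) => attach (s 0) (X (bas (⟨i, fun k => s k.succ⟩, z)))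

/-- the semantics of the `n`-th syntactic approximation of the unidirectionally recursive
Hadamard walk `X ⇐ T_L ⊕_{H[d]} (T_R ; X)`:
`⟦X^{(n)}⟧ = Σ_{i=0}^{n−1} (⊗_{j<i} |R⟩_{d_j}⟨R| ⊗ |L⟩_{d_i}⟨L|) H^{⊗(i+1)} ⊗ T_L T_R^i`. -/
def Xapprox (n : ℕ) : WalkSp →ₗ[ℂ] WalkSp :=
  ∑ i ∈ Finset.range n, shiftPos ((i : ℤ) - 1) ∘ₗ projQ i ∘ₗ hadAll

/-!
On a basis vector `e_{(i,s,m)}`, `⟦X^{(n)}⟧` vanishes unless `i < n`, and then only the coin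
string `R…RL` survives the projection, with amplitude `∏ₖ ⟨R…RL|H|s⟩ₖ`, at position `m + i - 1`.
Both sides of the recurrence are compared on basis vectors: in grade `0` only the `T_L` branch
contributes, and in grade `i + 1` the Hadamard amplitude of the front coin `d_0 = R` splits off
the product, leaving the shifted `⟦X^{(n)}⟧` on grade `i` followed by `T_R`.
-/

/-- The coin string `R…RL` of grade `i`. -/
def coinRL (i : ℕ) : Fin (i + 1) → Bool := fun k => decide ((k : ℕ) < i)

lemma cons_true_coinRL (i : ℕ) : Fin.cons true (coinRL i) = coinRL (i + 1) := by
  funext k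
  refine Fin.cases ?_ (fun k => ?_) k <;> simp [coinRL]

lemma prod_had_coinRL_succ (i : ℕ) (s : Fin (i + 2) → Bool) :
    ∏ k, had (coinRL (i + 1) k) (s k) = had true (s 0) * ∏ k, had (coinRL i k) (Fin.tail s k) := by
  rw [Fin.prod_univ_succ, ← cons_true_coinRL]
  rfl

lemma ext_bas {f g : WalkSp →ₗ[ℂ] WalkSp} (h : ∀ a, f (bas a) = g (bas a)) : f = g :=
  Finsupp.lhom_ext' fun a => LinearMap.ext_ring (h a)

lemma oper_bas (g : WalkIdx → WalkSp) (a : WalkIdx) : oper g (bas a) = g a := by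
  simp [oper, bas]

lemma shiftPos_bas (z : ℤ) (s : Σ i : ℕ, Fin (i + 1) → Bool) (m : ℤ) :
    shiftPos z (bas (s, m)) = bas (s, m + z) := by
  simp [shiftPos, bas, Finsupp.mapDomain_single]

lemma attach_bas (b : Bool) (i : ℕ) (t : Fin (i + 1) → Bool) (m : ℤ) :
    attach b (bas (⟨i, t⟩, m)) = bas (⟨i + 1, Fin.cons b t⟩, m) := by
  simp [attach, bas, Finsupp.mapDomain_single]

lemma projQ_bas (j i : ℕ) (t : Fin (i + 1) → Bool) (m : ℤ) :
    projQ j (bas (⟨i, t⟩, m)) = if i = j ∧ t = coinRL i then bas (⟨i, t⟩, m) else 0 := by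
  simp [projQ, oper_bas, coinRL, funext_iff]

lemma projR_bas (i : ℕ) (t : Fin (i + 1) → Bool) (m : ℤ) :
    projR (bas (⟨i, t⟩, m)) = if t 0 = true then bas (⟨i, t⟩, m) else 0 :=
  oper_bas _ _

lemma hadFirst_bas (i : ℕ) (s : Fin (i + 1) → Bool) (m : ℤ) :
    hadFirst (bas (⟨i, s⟩, m)) =
      ∑ b : Bool, had b (s 0) • bas (⟨⟨i, Function.update s 0 b⟩, m⟩) :=
  oper_bas _ _

lemma Kop_bas_zero (X : WalkSp →ₗ[ℂ] WalkSp) (s : Fin 1 → Bool) (m : ℤ) :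
    Kop X (bas (⟨0, s⟩, m)) = 0 :=
  oper_bas _ _

lemma Kop_bas_succ (X : WalkSp →ₗ[ℂ] WalkSp) (i : ℕ) (s : Fin (i + 2) → Bool) (m : ℤ) :
    Kop X (bas (⟨i + 1, s⟩, m)) = attach (s 0) (X (bas (⟨i, Fin.tail s⟩, m))) :=
  oper_bas _ _

lemma shiftPos_comp_attach (z : ℤ) (b : Bool) :
    shiftPos z ∘ₗ attach b = attach b ∘ₗ shiftPos z :=
  ext_bas fun ⟨⟨i, t⟩, m⟩ => by
    simp only [LinearMap.comp_apply, attach_bas, shiftPos_bas]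

lemma projR_comp_attach (b : Bool) :
    projR ∘ₗ attach b = if b then attach b else 0 :=
  ext_bas fun ⟨⟨i, t⟩, m⟩ => by
    cases b <;> simp [attach_bas, projR_bas]

lemma Kop_hadFirst_bas_zero (X : WalkSp →ₗ[ℂ] WalkSp) (s : Fin 1 → Bool) (m : ℤ) :
    Kop X (hadFirst (bas (⟨0, s⟩, m))) = 0 := by
  simp [hadFirst_bas, Kop_bas_zero]

lemma projQ_zero_shiftPos_hadFirst_bas_zero (s : Fin 1 → Bool) (m : ℤ) :
    projQ 0 (shiftPos (-1) (hadFirst (bas (⟨0, s⟩, m)))) =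
      had false (s 0) • bas (⟨⟨0, coinRL 0⟩, m - 1⟩) := by
  have hupdate (b : Bool) : Function.update s 0 b = fun _ => b := by
    funext k
    rw [Subsingleton.elim k 0, Function.update_self]
  have hcoin : coinRL 0 = fun _ => false := rfl
  simp [hadFirst_bas, shiftPos_bas, projQ_bas, hupdate, hcoin, funext_iff, sub_eq_add_neg]

lemma projQ_zero_shiftPos_hadFirst_bas_succ (z : ℤ) (i : ℕ) (s : Fin (i + 2) → Bool) (m : ℤ) :
    projQ 0 (shiftPos z (hadFirst (bas (⟨i + 1, s⟩, m)))) = 0 := by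
  simp [hadFirst_bas, shiftPos_bas, projQ_bas]

lemma projR_shiftPos_Kop_hadFirst_bas_succ (X : WalkSp →ₗ[ℂ] WalkSp) (z : ℤ) (i : ℕ)
    (s : Fin (i + 2) → Bool) (m : ℤ) :
    projR (shiftPos z (Kop X (hadFirst (bas (⟨i + 1, s⟩, m))))) =
      had true (s 0) • attach true (shiftPos z (X (bas (⟨i, Fin.tail s⟩, m)))) := by
  have h (b : Bool) : projR (shiftPos z (attach b (X (bas (⟨i, Fin.tail s⟩, m))))) =
      if b then attach b (shiftPos z (X (bas (⟨i, Fin.tail s⟩, m)))) else 0 := by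
    rw [← LinearMap.comp_apply (shiftPos z), shiftPos_comp_attach, LinearMap.comp_apply,
      ← LinearMap.comp_apply projR, projR_comp_attach]
    cases b <;> rfl
  simp [hadFirst_bas, Kop_bas_succ, Fin.tail_update_zero, h]

lemma Xapprox_bas (n i : ℕ) (s : Fin (i + 1) → Bool) (m : ℤ) :
    Xapprox n (bas (⟨i, s⟩, m)) =
      if i < n then (∏ k, had (coinRL i k) (s k)) • bas (⟨⟨i, coinRL i⟩, m + ((i : ℤ) - 1)⟩)
      else 0 := by
  have hterm (j : ℕ) : shiftPos ((j : ℤ) - 1) (projQ j (hadAll (bas (⟨i, s⟩, m)))) =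
      if i = j then (∏ k, had (coinRL i k) (s k)) • bas (⟨⟨i, coinRL i⟩, m + ((i : ℤ) - 1)⟩)
      else 0 := by
    rw [hadAll, oper_bas]
    split_ifs with hij
    · subst hij
      simp [projQ_bas, shiftPos_bas, Finset.sum_ite_eq']
    · simp [projQ_bas, hij]
  simp only [Xapprox, LinearMap.sum_apply, LinearMap.comp_apply, hterm,
    Finset.sum_ite_eq, Finset.mem_range]

lemma Xapprox_succ_bas_zero (n : ℕ) (s : Fin 1 → Bool) (m : ℤ) :
    Xapprox (n + 1) (bas (⟨0, s⟩, m)) = had false (s 0) • bas (⟨⟨0, coinRL 0⟩, m - 1⟩) := by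
  simp [Xapprox_bas, coinRL, sub_eq_add_neg]

lemma Xapprox_succ_bas_succ (n i : ℕ) (s : Fin (i + 2) → Bool) (m : ℤ) :
    Xapprox (n + 1) (bas (⟨i + 1, s⟩, m)) =
      had true (s 0) • attach true (shiftPos 1 (Xapprox n (bas (⟨i, Fin.tail s⟩, m)))) := by
  rw [Xapprox_bas, Xapprox_bas]
  by_cases hin : i < n
  · have hpos : m + (((i + 1 : ℕ) : ℤ) - 1) = m + ((i : ℤ) - 1) + 1 := by push_cast; ring
    simp only [hin, Nat.add_lt_add_iff_right, if_true, map_smul, shiftPos_bas, attach_bas,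
      cons_true_coinRL, prod_had_coinRL_succ, hpos, smul_smul]
  · simp [hin]

theorem recursive_hadamard_walk_approximation_general (n : ℕ) :
    Xapprox (n + 1) =
      (projQ 0 ∘ₗ shiftPos (-1) + projR ∘ₗ shiftPos 1 ∘ₗ Kop (Xapprox n)) ∘ₗ hadFirst := by
  refine ext_bas fun ⟨⟨i, s⟩, m⟩ => ?_
  simp only [LinearMap.comp_apply, LinearMap.add_apply]
  cases i with
  | zero =>
    rw [Kop_hadFirst_bas_zero, map_zero, map_zero, add_zero,
      projQ_zero_shiftPos_hadFirst_bas_zero, Xapprox_succ_bas_zero]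
  | succ i =>
    rw [projQ_zero_shiftPos_hadFirst_bas_succ, zero_add,
      projR_shiftPos_Kop_hadFirst_bas_succ, Xapprox_succ_bas_succ]

/-- **The recurrence for the syntactic approximations of the unidirectionally recursive
Hadamard walk**: for every `n ≥ 1`,
`⟦X^{(n+1)}⟧ = (|L⟩⟨L| ⊗ T_L + |R⟩⟨R| ⊗ (T_R · shifted ⟦X^{(n)}⟧))(H ⊗ I)`,
where the shifted term tensors an extra coin factor in front. -/
theorem recursive_hadamard_walk_approximation (n : ℕ) (hn : 1 ≤ n) :
    Xapprox (n + 1) =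
      (projQ 0 ∘ₗ shiftPos (-1) + projR ∘ₗ shiftPos 1 ∘ₗ Kop (Xapprox n)) ∘ₗ hadFirst :=
  recursive_hadamard_walk_approximation_general n

end
end
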